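/- For every integer n ≥ 1: (Rule B) S_{P_{n+1} − k}(2√2) = S_{P_n}(2√2) + S_{k−1}(2√2) for all integers k with 1 ≤ k ≤ P_{n−1}; and (Rule C) S_{P_n + k}(2√2) = S_{P_n}(2√2) + S_k(2√2) for all integers k with 1 ≤ k < P_n. -/

import Mathlib

/-!
With `τ = √2 - 1`, the identity `P (n+1) · 2√2 = 2 (P (n+1) + P n) - 2 (-τ)^(n+1)` shows that
shifting `j` by `P n`, or reflecting it about `P (n+1)`, changes `⌊j · 2√2⌋` by an even integer
plus the effect of a perturbation of size at most `2 τ^n`. For the relevant `j` this perturbation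
never moves `j · 2√2` across an integer: squares are `0, 1, 4` mod `8`, so `|m² - 8 j²| ≥ 4`
unless `m² - 8 j² = 1`, and in that Pell case `m - j · 2√2 = τ^(2i)` with `2 j = P (2i)`, where
`τ^(2i)` is still large compared to `τ^n`. Hence the increments `ε j = (-1)^⌊j · 2√2⌋` satisfy
`ε (P n + j) = ε j` and `ε (P (n+1) - i) = -ε i`. The first gives Rule C, the second a reflection
rule, and Rule B follows from it once `S (P (n+1) - 1) = S (P n)`, which holds by induction on `n`.
-/

/-- The deterministic random walk `S_n(ξ) = ∑_{j=1}^n (-1)^⌊j·ξ⌋`. -/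
noncomputable def S (ξ : ℝ) (n : ℕ) : ℤ :=
  ∑ j ∈ Finset.Icc 1 n, ((Int.negOnePow ⌊(j : ℝ) * ξ⌋ : ℤˣ) : ℤ)

/-- The Pell numbers: `P 0 = 0`, `P 1 = 1`, `P (n+2) = 2·P (n+1) + P n`. -/
def pell : ℕ → ℕ
  | 0 => 0
  | 1 => 1
  | n + 2 => 2 * pell (n + 1) + pell n

noncomputable def walkStep (ξ : ℝ) (j : ℕ) : ℤ := ((Int.negOnePow ⌊(j : ℝ) * ξ⌋ : ℤˣ) : ℤ)

section Walk

variable {ξ : ℝ}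

lemma S_succ (n : ℕ) : S ξ (n + 1) = S ξ n + walkStep ξ (n + 1) :=
  Finset.sum_Icc_succ_top (by omega) _

lemma S_eq_S_sub_one_add {n : ℕ} (hn : 1 ≤ n) : S ξ n = S ξ (n - 1) + walkStep ξ n := by
  obtain ⟨m, rfl⟩ : ∃ m, n = m + 1 := ⟨n - 1, by omega⟩
  exact S_succ m

lemma S_add_of_walkStep_add {a k : ℕ}
    (h : ∀ j, 1 ≤ j → j ≤ k → walkStep ξ (a + j) = walkStep ξ j) :
    S ξ (a + k) = S ξ a + S ξ k := by
  induction k with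
  | zero => simp [S]
  | succ k ih =>
    rw [← add_assoc, S_succ, S_succ, ih fun j hj hjk ↦ h j hj (by omega), add_assoc a k 1,
      h (k + 1) (by omega) le_rfl]
    ring

lemma S_sub_of_walkStep_sub {a i : ℕ} (hi : i < a)
    (h : ∀ j, 1 ≤ j → j ≤ i → walkStep ξ (a - j) = -walkStep ξ j) :
    S ξ (a - 1 - i) = S ξ (a - 1) + S ξ i := by
  induction i with
  | zero => simp [S]
  | succ i ih =>
    have hstep := S_succ (ξ := ξ) (a - 1 - (i + 1))
    rw [show a - 1 - (i + 1) + 1 = a - (i + 1) by omega, h (i + 1) (by omega) le_rfl,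
      show a - (i + 1) = a - 1 - i by omega, ih (by omega) fun j hj hji ↦ h j hj (by omega)]
      at hstep
    rw [S_succ]
    linarith

end Walk

lemma pell_succ_succ (n : ℕ) : pell (n + 2) = 2 * pell (n + 1) + pell n := rfl

lemma pell_mono : Monotone pell :=
  monotone_nat_of_le_succ fun
    | 0 => by simp [pell]
    | n + 1 => by rw [pell_succ_succ]; omega

lemma pell_pos {n : ℕ} (hn : 1 ≤ n) : 0 < pell n := pell_mono hn

lemma two_mul_pell_le {n : ℕ} (hn : 1 ≤ n) : 2 * pell n ≤ pell (n + 1) := by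
  obtain ⟨m, rfl⟩ : ∃ m, n = m + 1 := ⟨n - 1, by omega⟩
  rw [pell_succ_succ]
  omega

noncomputable def silverRatioInv : ℝ := √2 - 1

local notation "τ" => silverRatioInv

lemma sqrt_two_eq : √2 = 1 + τ := by rw [silverRatioInv]; ring

lemma silverRatioInv_sq : τ ^ 2 = 1 - 2 * τ := by
  have h : √2 ^ 2 = 2 := Real.sq_sqrt (by norm_num)
  rw [sqrt_two_eq] at h
  linear_combination h

lemma silverRatioInv_pos : 0 < τ := by
  rw [silverRatioInv, sub_pos]
  exact Real.one_lt_sqrt_two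

lemma two_mul_silverRatioInv_lt_one : 2 * τ < 1 := by
  nlinarith [silverRatioInv_sq, silverRatioInv_pos]

lemma pell_sub_mul_pell_succ (n : ℕ) : (pell n : ℝ) - τ * pell (n + 1) = (-τ) ^ (n + 1) := by
  induction n with
  | zero => simp [pell]
  | succ n ih =>
    have h : (pell (n + 2) : ℝ) = 2 * pell (n + 1) + pell n := by simp [pell]
    rw [h, pow_succ, ← ih]
    linear_combination -(pell (n + 1) : ℝ) * silverRatioInv_sq

lemma pell_succ_mul_two_sqrt_two (n : ℕ) :
    (pell (n + 1) : ℝ) * (2 * √2) = 2 * (pell (n + 1) + pell n) - 2 * (-τ) ^ (n + 1) := by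
  rw [← pell_sub_mul_pell_succ, sqrt_two_eq]
  ring

lemma pell_mul_pow_mul (n : ℕ) : (pell n : ℝ) * τ ^ n * (2 * √2) = 1 - (-τ ^ 2) ^ n := by
  induction n with
  | zero => simp [pell]
  | succ n ih =>
    rw [sqrt_two_eq] at *
    linear_combination ih - τ ^ n * (2 * (1 + τ)) * pell_sub_mul_pell_succ n
      + (-τ ^ 2) ^ n * silverRatioInv_sq

lemma pell_mul_pow_mul_le (n : ℕ) : (pell n : ℝ) * τ ^ n * (2 * √2) ≤ 1 + τ ^ n := by
  have hτ : τ ^ 2 ≤ τ := by nlinarith [silverRatioInv_sq, silverRatioInv_pos]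
  calc (pell n : ℝ) * τ ^ n * (2 * √2) = 1 - (-τ ^ 2) ^ n := pell_mul_pow_mul n
    _ ≤ 1 + |(-τ ^ 2) ^ n| := by linarith [neg_abs_le ((-τ ^ 2) ^ n)]
    _ = 1 + (τ ^ 2) ^ n := by rw [abs_pow, abs_neg, abs_of_nonneg (by positivity)]
    _ ≤ 1 + τ ^ n := by gcongr

local notation "x₃" => Pell.xn (a := 3) Nat.one_lt_ofNat

local notation "y₃" => Pell.yn (a := 3) Nat.one_lt_ofNat

lemma xn_three_succ (k : ℕ) : x₃ (k + 1) = x₃ k * 3 + 8 * y₃ k := Pell.xn_succ _ k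

lemma pell_two_mul_eq_and_pell_two_mul_add_one_eq (k : ℕ) :
    pell (2 * k) = 2 * y₃ k ∧ pell (2 * k + 1) = x₃ k + 2 * y₃ k := by
  induction k with
  | zero => simp [pell]
  | succ k ih =>
    have h₁ : pell (2 * (k + 1)) = 2 * pell (2 * k + 1) + pell (2 * k) := pell_succ_succ (2 * k)
    have h₂ : pell (2 * (k + 1) + 1) = 2 * pell (2 * (k + 1)) + pell (2 * k + 1) :=
      pell_succ_succ (2 * k + 1)
    rw [h₂, h₁, ih.1, ih.2, xn_three_succ, Pell.yn_succ]
    constructor <;> ring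

lemma xn_sub_yn_mul_two_sqrt_two (k : ℕ) : (x₃ k : ℝ) - y₃ k * (2 * √2) = τ ^ (2 * k) := by
  induction k with
  | zero => simp
  | succ k ih =>
    have hτ : τ ^ 2 = 3 - 2 * √2 := by rw [silverRatioInv_sq, sqrt_two_eq]; ring
    rw [xn_three_succ, Pell.yn_succ, mul_add, pow_add, ← ih, hτ]
    push_cast
    linear_combination (-4 * y₃ k : ℝ) * Real.sq_sqrt (show (0 : ℝ) ≤ 2 by norm_num)

lemma exists_pell_eq_of_sq_eq {G j : ℕ} (h : G ^ 2 = 8 * j ^ 2 + 1) :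
    ∃ i, 2 * j = pell (2 * i) ∧ (G : ℝ) - j * (2 * √2) = τ ^ (2 * i) := by
  have hG : G * G - 8 * j * j = 1 := by rw [mul_assoc, ← sq, ← sq, h]; omega
  obtain ⟨i, rfl, rfl⟩ := Pell.eq_pell (a := 3) Nat.one_lt_ofNat hG
  exact ⟨i, (pell_two_mul_eq_and_pell_two_mul_add_one_eq i).1.symm, xn_sub_yn_mul_two_sqrt_two i⟩

lemma sq_emod_eight (F : ℤ) : F ^ 2 % 8 = 0 ∨ F ^ 2 % 8 = 1 ∨ F ^ 2 % 8 = 4 := by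
  have h₀ := Int.emod_nonneg F (by norm_num : (8 : ℤ) ≠ 0)
  have h₈ := Int.emod_lt_of_pos F (by norm_num : (0 : ℤ) < 8)
  rw [sq, Int.mul_emod]
  interval_cases F % 8 <;> decide

section FractionalParts

variable {j : ℕ}

lemma natCast_mul_two_sqrt_two_sq : ((j : ℝ) * (2 * √2)) ^ 2 = 8 * j ^ 2 := by
  linear_combination (4 * (j : ℝ) ^ 2) * Real.sq_sqrt (show (0 : ℝ) ≤ 2 by norm_num)

lemma two_lt_fract_mul_self (hj : 1 ≤ j) :
    2 < Int.fract (j * (2 * √2)) * (j * (2 * √2)) := by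
  set x : ℝ := j * (2 * √2)
  have hx : 0 < x := by positivity
  have hirr : Irrational x := by
    have : x = ((2 * j : ℕ) : ℝ) * √2 := by push_cast; ring
    exact this ▸ irrational_sqrt_two.natCast_mul (by omega)
  have hF₀ : 0 ≤ ⌊x⌋ := Int.floor_nonneg.2 hx.le
  have hFx : (⌊x⌋ : ℝ) < x := (Int.floor_le x).lt_of_ne (hirr.ne_int _).symm
  have hsq : ⌊x⌋ ^ 2 < 8 * (j : ℤ) ^ 2 := by
    have : (⌊x⌋ : ℝ) ^ 2 < x ^ 2 := by gcongr
    rw [natCast_mul_two_sqrt_two_sq] at this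
    exact_mod_cast this
  have hgap : (4 : ℝ) ≤ x ^ 2 - ⌊x⌋ ^ 2 := by
    have := sq_emod_eight ⌊x⌋
    rw [natCast_mul_two_sqrt_two_sq]
    exact_mod_cast (by omega : 4 ≤ 8 * (j : ℤ) ^ 2 - ⌊x⌋ ^ 2)
  rw [Int.fract]
  nlinarith [mul_pos (sub_pos.2 hFx) (sub_pos.2 hFx)]

lemma four_lt_one_sub_fract_mul_or_eq_pow (hj : 1 ≤ j) :
    4 < (1 - Int.fract (j * (2 * √2))) * (2 * (j * (2 * √2)) + 1) ∨
      ∃ i, 2 * j = pell (2 * i) ∧ 1 - Int.fract (j * (2 * √2)) = τ ^ (2 * i) := by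
  set x : ℝ := j * (2 * √2)
  have hx : 0 < x := by positivity
  have hfract := two_lt_fract_mul_self hj
  have hG : 1 - Int.fract x = ((⌊x⌋ + 1 : ℤ) : ℝ) - x := by rw [Int.fract]; push_cast; ring
  have hxG : x < ((⌊x⌋ + 1 : ℤ) : ℝ) := by push_cast; exact Int.lt_floor_add_one x
  have hGx : ((⌊x⌋ + 1 : ℤ) : ℝ) < x + 1 := by
    have : 0 < Int.fract x := by nlinarith [Int.fract_nonneg x]
    rw [Int.fract] at this
    push_cast
    linarith
  have hG₀ : 0 ≤ ⌊x⌋ + 1 := by have := Int.floor_nonneg.2 hx.le; omega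
  have hsq : 8 * (j : ℤ) ^ 2 < (⌊x⌋ + 1) ^ 2 := by
    have : x ^ 2 < ((⌊x⌋ + 1 : ℤ) : ℝ) ^ 2 := by gcongr
    rw [natCast_mul_two_sqrt_two_sq] at this
    exact_mod_cast this
  rw [hG]
  generalize ⌊x⌋ + 1 = G at *
  by_cases hone : G ^ 2 = 8 * (j : ℤ) ^ 2 + 1
  · right
    lift G to ℕ using hG₀
    exact exists_pell_eq_of_sq_eq (by exact_mod_cast hone)
  · left
    have hgap : (4 : ℝ) ≤ G ^ 2 - x ^ 2 := by
      have := sq_emod_eight G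
      rw [natCast_mul_two_sqrt_two_sq]
      exact_mod_cast (by omega : 4 ≤ G ^ 2 - 8 * (j : ℤ) ^ 2)
    nlinarith

lemma floor_add_eq_and_ceil_add_eq (hj : 1 ≤ j) {s : ℝ}
    (hs : |s| * (2 * (j * (2 * √2)) + 1) ≤ 4)
    (hpell : ∀ i, 2 * j = pell (2 * i) → s < τ ^ (2 * i)) :
    ⌊j * (2 * √2) + s⌋ = ⌊j * (2 * √2)⌋ ∧ ⌈j * (2 * √2) + s⌉ = ⌊j * (2 * √2)⌋ + 1 := by
  set x : ℝ := j * (2 * √2)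
  have hx : 0 < x := by positivity
  have hfract := two_lt_fract_mul_self hj
  have hlow : -Int.fract x < s := by
    rcases le_or_gt 0 s with h | h
    · nlinarith [Int.fract_nonneg x]
    · rw [abs_of_neg h] at hs
      nlinarith
  have hhigh : s < 1 - Int.fract x := by
    rcases le_or_gt s 0 with h | h
    · linarith [Int.fract_lt_one x]
    · rcases four_lt_one_sub_fract_mul_or_eq_pow hj with h4 | ⟨i, hi, hτ⟩
      · rw [abs_of_pos h] at hs
        nlinarith
      · exact hτ ▸ hpell i hi
  have hx' := Int.floor_add_fract x
  constructor
  · rw [Int.floor_eq_iff]; constructor <;> linarith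
  · rw [Int.ceil_eq_iff]; push_cast; constructor <;> linarith

lemma floor_sub_eq_and_ceil_sub_eq {n : ℕ} (hj : 1 ≤ j) (h2j : 2 * j < pell (n + 1))
    {c : ℝ} (hc₀ : 0 < c) (hc₁ : c ≤ 1) (hs : 2 * c * τ ^ n * (2 * (j * (2 * √2)) + 1) ≤ 4) :
    ⌊j * (2 * √2) - 2 * c * (-τ) ^ n⌋ = ⌊j * (2 * √2)⌋ ∧
      ⌈j * (2 * √2) - 2 * c * (-τ) ^ n⌉ = ⌊j * (2 * √2)⌋ + 1 := by
  have habs : |2 * c * (-τ) ^ n| = 2 * c * τ ^ n := by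
    rw [abs_mul, abs_pow, abs_neg, abs_of_pos silverRatioInv_pos, abs_of_pos (by positivity)]
  rw [sub_eq_add_neg]
  refine floor_add_eq_and_ceil_add_eq hj (by rwa [abs_neg, habs]) fun i hi ↦ ?_
  have h2i : 2 * i < n + 1 := pell_mono.reflect_lt (hi ▸ h2j)
  have hτi := pow_pos silverRatioInv_pos (2 * i)
  rcases (show 2 * i = n ∨ 2 * i + 1 ≤ n by omega) with rfl | hlt
  · rw [Even.neg_pow ⟨i, two_mul i⟩]
    nlinarith
  · calc -(2 * c * (-τ) ^ n) ≤ 2 * c * τ ^ n := habs ▸ neg_le_abs _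
      _ ≤ 2 * τ ^ n := by nlinarith [pow_pos silverRatioInv_pos n]
      _ ≤ 2 * τ ^ (2 * i + 1) := by
        gcongr 2 * ?_
        exact pow_le_pow_of_le_one silverRatioInv_pos.le
          (by linarith [two_mul_silverRatioInv_lt_one]) hlt
      _ < τ ^ (2 * i) := by rw [pow_succ]; nlinarith [two_mul_silverRatioInv_lt_one]

end FractionalParts

lemma walkStep_pell_add {n j : ℕ} (hn : 1 ≤ n) (hj : 1 ≤ j) (hjn : j < pell n) :
    walkStep (2 * √2) (pell n + j) = walkStep (2 * √2) j := by
  obtain ⟨m, rfl⟩ : ∃ m, n = m + 1 := ⟨n - 1, by omega⟩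
  have h2j : 2 * j < pell (m + 2) := by
    have : 2 * pell (m + 1) ≤ pell (m + 2) := two_mul_pell_le (by omega)
    omega
  have hbound : 2 * 1 * τ ^ (m + 1) * (2 * (j * (2 * √2)) + 1) ≤ 4 := by
    have hP := pell_mul_pow_mul_le (m + 1)
    have hjP : (j : ℝ) + 1 ≤ pell (m + 1) := by exact_mod_cast hjn
    have hT := pow_pos silverRatioInv_pos (m + 1)
    have hξ : (2 : ℝ) ≤ 2 * √2 := by linarith [Real.one_lt_sqrt_two]
    nlinarith [mul_le_mul_of_nonneg_left hjP (by positivity : (0 : ℝ) ≤ τ ^ (m + 1) * (2 * √2))]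
  have hsplit : ((pell (m + 1) + j : ℕ) : ℝ) * (2 * √2) =
      (j * (2 * √2) - 2 * 1 * (-τ) ^ (m + 1)) + ((2 * (pell (m + 1) + pell m) : ℤ) : ℝ) := by
    push_cast
    linear_combination pell_succ_mul_two_sqrt_two m
  rw [walkStep, walkStep, hsplit, Int.floor_add_intCast,
    (floor_sub_eq_and_ceil_sub_eq hj h2j one_pos le_rfl hbound).1, Int.negOnePow_add,
    Int.negOnePow_two_mul, mul_one]

lemma walkStep_pell_succ_sub {n i : ℕ} (hn : 2 ≤ n) (hi : 1 ≤ i) (hin : i ≤ pell n) :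
    walkStep (2 * √2) (pell (n + 1) - i) = -walkStep (2 * √2) i := by
  have h2i : 2 * i < pell (n + 1) := by
    obtain ⟨m, rfl⟩ : ∃ m, n = m + 1 := ⟨n - 1, by omega⟩
    have := pell_pos (n := m) (by omega)
    rw [pell_succ_succ]
    omega
  have hbound : 2 * τ * τ ^ n * (2 * (i * (2 * √2)) + 1) ≤ 4 := by
    have hP := pell_mul_pow_mul_le n
    have hiP : (i : ℝ) ≤ pell n := by exact_mod_cast hin
    have hT := pow_pos silverRatioInv_pos n
    have hTτ : τ ^ n ≤ τ := pow_le_of_le_one silverRatioInv_pos.le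
      (by linarith [two_mul_silverRatioInv_lt_one]) (by omega)
    have hτ := silverRatioInv_pos
    nlinarith [mul_le_mul_of_nonneg_left hiP (by positivity : (0 : ℝ) ≤ τ * τ ^ n * (2 * √2)),
      two_mul_silverRatioInv_lt_one]
  have hsplit : ((pell (n + 1) - i : ℕ) : ℝ) * (2 * √2) =
      -(i * (2 * √2) - 2 * τ * (-τ) ^ n) + ((2 * (pell (n + 1) + pell n) : ℤ) : ℝ) := by
    rw [Nat.cast_sub (by omega)]
    push_cast
    linear_combination pell_succ_mul_two_sqrt_two n
  rw [walkStep, walkStep, hsplit, Int.floor_add_intCast, Int.floor_neg,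
    (floor_sub_eq_and_ceil_sub_eq hi (by omega) silverRatioInv_pos
      (by linarith [two_mul_silverRatioInv_lt_one]) hbound).2,
    Int.negOnePow_add, Int.negOnePow_two_mul, mul_one, Int.negOnePow_neg, Int.negOnePow_succ,
    Units.val_neg]

lemma walkStep_pell_succ {n : ℕ} (hn : 1 ≤ n) :
    walkStep (2 * √2) (pell (n + 1)) = -walkStep (2 * √2) (pell n) := by
  have hlt : pell n < pell (n + 1) := by
    have : 2 * pell n ≤ pell (n + 1) := two_mul_pell_le hn
    have := pell_pos hn
    omega
  have hshift := walkStep_pell_add (n := n + 1) (by omega) (pell_pos hn) hlt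
  have hrefl := walkStep_pell_succ_sub (n := n + 1) (by omega) (pell_pos (by omega)) le_rfl
  rw [pell_succ_succ, show 2 * pell (n + 1) + pell n - pell (n + 1) = pell (n + 1) + pell n by
    omega, hshift] at hrefl
  rw [hrefl, neg_neg]

lemma S_pell_add {n k : ℕ} (hn : 1 ≤ n) (hk : k < pell n) :
    S (2 * √2) (pell n + k) = S (2 * √2) (pell n) + S (2 * √2) k :=
  S_add_of_walkStep_add fun _ hj hjk ↦ walkStep_pell_add hn hj (by omega)

lemma S_pell_succ_sub_one_sub {n i : ℕ} (hn : 2 ≤ n) (hi : i ≤ pell n) :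
    S (2 * √2) (pell (n + 1) - 1 - i) = S (2 * √2) (pell (n + 1) - 1) + S (2 * √2) i := by
  have : 2 * pell n ≤ pell (n + 1) := two_mul_pell_le (by omega)
  have := pell_pos (n := n) (by omega)
  exact S_sub_of_walkStep_sub (by omega) fun _ hj hji ↦ walkStep_pell_succ_sub hn hj (by omega)

lemma S_pell_succ_sub_one {n : ℕ} (hn : 1 ≤ n) :
    S (2 * √2) (pell (n + 1) - 1) = S (2 * √2) (pell n) := by
  induction n, hn using Nat.le_induction with
  | base => rfl
  | succ n hn ih =>
    have hP := pell_pos hn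
    have hmono : pell n ≤ pell (n + 1) := pell_mono n.le_succ
    have hrefl := S_pell_succ_sub_one_sub (n := n + 1) (by omega) le_rfl
    rw [pell_succ_succ, show 2 * pell (n + 1) + pell n - 1 - pell (n + 1) =
      pell (n + 1) + (pell n - 1) by omega, S_pell_add (by omega) (by omega),
      ← pell_succ_succ] at hrefl
    have h₁ := S_eq_S_sub_one_add (ξ := 2 * √2) hP
    have h₂ := S_eq_S_sub_one_add (ξ := 2 * √2) (pell_pos (n := n + 1) (by omega))
    have h₃ := walkStep_pell_succ hn
    linarith

/-- Rules B and C for the walk `S_n(2√2)`. -/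
theorem stmt_9 (n : ℕ) (hn : 1 ≤ n) :
    (∀ k : ℕ, 1 ≤ k → k ≤ pell (n - 1) →
      S (2 * Real.sqrt 2) (pell (n + 1) - k) =
        S (2 * Real.sqrt 2) (pell n) + S (2 * Real.sqrt 2) (k - 1)) ∧
    (∀ k : ℕ, 1 ≤ k → k < pell n →
      S (2 * Real.sqrt 2) (pell n + k) =
        S (2 * Real.sqrt 2) (pell n) + S (2 * Real.sqrt 2) k) := by
  refine ⟨fun k hk hkn ↦ ?_, fun k _ hkn ↦ S_pell_add hn hkn⟩
  have hn2 : 2 ≤ n := by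
    by_contra h
    obtain rfl : n = 1 := by omega
    simp [pell] at hkn
    omega
  have hk' : k - 1 ≤ pell n := (Nat.sub_le k 1).trans (hkn.trans (pell_mono (Nat.sub_le n 1)))
  have hreflect := S_pell_succ_sub_one_sub hn2 hk'
  rw [show pell (n + 1) - 1 - (k - 1) = pell (n + 1) - k by omega] at hreflect
  rw [hreflect, S_pell_succ_sub_one (by omega)]
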